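/- arXiv:2210.10285 — 2 statements merged into one kernel-verified Lean document; each statement's English description precedes it below -/
import Mathlib

section
/- An inert subring of a GCD domain is a GCD domain. -/
/-!
An ideal `(a) ∩ (b)` is principal exactly when `a` and `b` have an lcm, i.e. an element whose
multiples are the common multiples of `a` and `b`. For `a, b ∈ B` an lcm `c` in `A` divides `ab`,
so it lies in `B` by inertness; and inertness also makes divisibility between elements of `B` the
same in `B` as in `A`, so `c` is an lcm of `a` and `b` in `B` as well.
-/

theorem Ideal.isPrincipal_span_singleton_inf_span_singleton_iff {R : Type*} [CommSemiring R]
    (a b : R) :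
    (Ideal.span {a} ⊓ Ideal.span {b}).IsPrincipal ↔ ∃ c : R, ∀ t, c ∣ t ↔ a ∣ t ∧ b ∣ t := by
  refine ⟨fun ⟨c, hc⟩ => ⟨c, fun t => ?_⟩, fun ⟨c, hc⟩ => ⟨c, ?_⟩⟩
  · have := SetLike.ext_iff.mp hc t
    simp only [Submodule.mem_inf, Ideal.mem_span_singleton, Ideal.submodule_span_eq] at this
    exact this.symm
  · ext t
    simp only [Submodule.mem_inf, Ideal.mem_span_singleton, Ideal.submodule_span_eq]
    exact (hc t).symm

def Subring.IsInert {A : Type*} [Ring A] (B : Subring A) : Prop :=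
  ∀ f g : A, f ≠ 0 → g ≠ 0 → f * g ∈ B → f ∈ B ∧ g ∈ B

namespace Subring.IsInert

variable {A : Type*} [CommRing A] {B : Subring A}

theorem mem_of_dvd (hB : B.IsInert) {f g : A} (hg : g ∈ B) (hg0 : g ≠ 0) (hfg : f ∣ g) :
    f ∈ B := by
  obtain ⟨u, rfl⟩ := hfg
  exact (hB f u (left_ne_zero_of_mul hg0) (right_ne_zero_of_mul hg0) hg).1

theorem coe_dvd_coe_iff (hB : B.IsInert) {x y : B} : (x : A) ∣ y ↔ x ∣ y := by
  refine ⟨fun hxy => ?_, map_dvd B.subtype⟩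
  rcases eq_or_ne y 0 with rfl | hy
  · exact dvd_zero x
  obtain ⟨u, hu⟩ := hxy
  have huB : u ∈ B :=
    hB.mem_of_dvd y.2 (by simpa using hy) (Dvd.intro_left _ hu.symm)
  exact ⟨⟨u, huB⟩, Subtype.ext hu⟩

theorem lcm_mem [NoZeroDivisors A] (hB : B.IsInert) {a b c : A} (ha : a ∈ B) (hb : b ∈ B)
    (hc : ∀ t, c ∣ t ↔ a ∣ t ∧ b ∣ t) : c ∈ B := by
  rcases eq_or_ne (a * b) 0 with hab | hab
  · obtain ⟨hac, hbc⟩ := (hc c).mp dvd_rfl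
    have hc0 : c = 0 := by
      rcases mul_eq_zero.mp hab with h | h
      exacts [zero_dvd_iff.mp (h ▸ hac), zero_dvd_iff.mp (h ▸ hbc)]
    exact hc0 ▸ B.zero_mem
  · exact hB.mem_of_dvd (mul_mem ha hb) hab ((hc _).mpr ⟨dvd_mul_right _ _, dvd_mul_left _ _⟩)

end Subring.IsInert

/-- An inert subring of a GCD (HCF) domain is a GCD domain, where a GCD domain means
that the intersection of any two principal ideals is principal. -/
theorem stmt_4 {A : Type*} [CommRing A] [IsDomain A]
    (hgcd : ∀ a b : A, (Ideal.span {a} ⊓ Ideal.span {b}).IsPrincipal)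
    (B : Subring A)
    (hinert : ∀ f g : A, f ≠ 0 → g ≠ 0 → f * g ∈ B → f ∈ B ∧ g ∈ B) :
    ∀ a b : B, ((Ideal.span {a} ⊓ Ideal.span {b} : Ideal B)).IsPrincipal := by
  intro a b
  have hB : B.IsInert := hinert
  obtain ⟨c, hc⟩ := (Ideal.isPrincipal_span_singleton_inf_span_singleton_iff _ _).mp (hgcd a b)
  refine (Ideal.isPrincipal_span_singleton_inf_span_singleton_iff a b).mpr
    ⟨⟨c, hB.lcm_mem a.2 b.2 hc⟩, fun t => ?_⟩
  simp only [← hB.coe_dvd_coe_iff]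
  exact hc t
end

section
/- Let A be an integral domain containing ℚ and D : A → A a nonzero locally nilpotent derivation. Then the transcendence degree of A over Ker(D) equals 1. -/
/-!
Choose a local slice `t`, i.e. `D t ≠ 0` and `D (D t) = 0`: it exists because `D` is locally
nilpotent. As `D (p t) = p' t * D t` and `A` is a domain of characteristic zero, a polynomial over
`Ker D` vanishing at `t` has derivative vanishing at `t`, so by induction on the degree `t` is
transcendental over `Ker D`. Conversely, as `ℚ ⊆ Ker D`, every element of `D t * Ker(D)[t]` has a
`D`-antiderivative in `Ker(D)[t]`; by induction on `m`, if `D^m a = 0` then `(D t)^m * a` lies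
in `Ker(D)[t]`, so every `a` is algebraic over `Ker(D)[t]`.
-/

open Polynomial

theorem Function.exists_apply_ne_zero_and_apply_apply_eq_zero {M : Type*} [Zero M] {f : M → M}
    (hf : f 0 = 0) {x : M} (hfx : f x ≠ 0) {n : ℕ} (hx : f^[n] x = 0) :
    ∃ y, f y ≠ 0 ∧ f (f y) = 0 := by
  induction n generalizing x with
  | zero => exact absurd (by rw [show x = 0 from hx, hf]) hfx
  | succ n ih =>
    by_cases hffx : f (f x) = 0
    · exact ⟨x, hfx, hffx⟩
    · exact ih hffx (by rwa [← Function.iterate_succ_apply])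

namespace Derivation

variable {R A : Type*} [CommRing R] [CommRing A] [Algebra R A]

def extendScalars (D : Derivation R A A) (B : Subalgebra R A) (hB : ∀ b : B, D b = 0) :
    Derivation B A A :=
  Derivation.mk'
    { toFun := D
      map_add' := D.map_add
      map_smul' := fun b a => by
        rw [RingHom.id_apply, Subalgebra.smul_def, smul_eq_mul, D.leibniz, hB, smul_zero,
          add_zero, Subalgebra.smul_def] }
    D.leibniz

theorem transcendental_of_map_ne_zero [IsDomain A] [IsAddTorsionFree R] [FaithfulSMul R A]
    (D : Derivation R A A) {t : A} (hDt : D t ≠ 0) : Transcendental R t := by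
  rw [transcendental_iff]
  intro p hp
  induction h : p.natDegree using Nat.strong_induction_on generalizing p with
  | _ n ih =>
  have hp' : aeval t (derivative p) = 0 := by
    have hDp := D.map_aeval p t
    rw [hp, map_zero, smul_eq_mul, eq_comm, mul_eq_zero] at hDp
    exact hDp.resolve_right hDt
  have hder : derivative p = 0 := by
    rcases Nat.eq_zero_or_pos n with h0 | hpos
    · rwa [derivative_eq_zero, h]
    · exact ih _ (by rw [natDegree_derivative]; omega) _ hp' rfl
  rw [eq_C_of_derivative_eq_zero hder, aeval_C,
    map_eq_zero_iff _ (FaithfulSMul.algebraMap_injective R A)] at hp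
  rw [eq_C_of_derivative_eq_zero hder, hp, C_0]

variable [Algebra ℚ A] (D : Derivation R A A)

theorem exists_mem_adjoin_map_eq_mul (hker : ∀ a, D a = 0 → a ∈ (⊥ : Subalgebra R A))
    {t r : A} (hr : r ∈ Algebra.adjoin R {t}) :
    ∃ r₁ ∈ Algebra.adjoin R {t}, D r₁ = D t * r := by
  rw [Algebra.adjoin_singleton_eq_range_aeval] at hr
  obtain ⟨p, rfl⟩ := hr
  induction p using Polynomial.induction_on' with
  | add p q hp hq =>
    obtain ⟨r, hr, hDr⟩ := hp
    obtain ⟨r', hr', hDr'⟩ := hq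
    exact ⟨r + r', add_mem hr hr', by rw [map_add, map_add, hDr, hDr', mul_add]⟩
  | monomial n b =>
    have hDq : D (algebraMap ℚ A (n + 1 : ℚ)⁻¹) = 0 := by
      rw [Algebra.algebraMap_eq_smul_one, map_rat_smul, D.map_one_eq_zero, smul_zero]
    have hq : algebraMap ℚ A (n + 1 : ℚ)⁻¹ ∈ Algebra.adjoin R {t} :=
      bot_le (a := Algebra.adjoin R {t}) (hker _ hDq)
    refine ⟨b • ((n + 1 : ℚ)⁻¹ • t ^ (n + 1)), Subalgebra.smul_mem _ ?_ _, ?_⟩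
    · rw [Algebra.smul_def]
      exact mul_mem hq (pow_mem (Algebra.self_mem_adjoin_singleton R t) _)
    · rw [D.map_smul, map_rat_smul, D.leibniz_pow, Nat.add_sub_cancel,
        ← Nat.cast_smul_eq_nsmul ℚ, Nat.cast_succ, inv_smul_smul₀ (by positivity)]
      change _ = D t * aeval t (monomial n b)
      rw [aeval_monomial, Algebra.smul_def, smul_eq_mul]
      ring

theorem pow_mul_mem_adjoin_of_iterate_eq_zero
    (hker : ∀ a, D a = 0 → a ∈ (⊥ : Subalgebra R A)) {t : A} (hDDt : D (D t) = 0) {m : ℕ}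
    {a : A} (ha : D^[m] a = 0) : D t ^ m * a ∈ Algebra.adjoin R {t} := by
  induction m generalizing a with
  | zero => simp_all
  | succ m ih =>
    obtain ⟨r, hr, hDr⟩ := D.exists_mem_adjoin_map_eq_mul hker (ih ha)
    have hconst : D (D t ^ (m + 1) * a - r) = 0 := by
      rw [map_sub, D.leibniz, D.leibniz_pow, hDDt, hDr]
      simp only [smul_eq_mul]
      ring
    have := add_mem (bot_le (a := Algebra.adjoin R {t}) (hker _ hconst)) hr
    rwa [sub_add_cancel] at this

theorem isAlgebraic_adjoin_singleton [IsDomain A]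
    (hker : ∀ a, D a = 0 → a ∈ (⊥ : Subalgebra R A)) (hln : ∀ a, ∃ n, D^[n] a = 0) {t : A}
    (hDt : D t ≠ 0) (hDDt : D (D t) = 0) : Algebra.IsAlgebraic (Algebra.adjoin R {t}) A := by
  refine ⟨fun a ↦ ?_⟩
  obtain ⟨m, hm⟩ := hln a
  let s : Algebra.adjoin R {t} := ⟨D t, bot_le (a := Algebra.adjoin R {t}) (hker _ hDDt)⟩
  have hs : s ^ m ≠ 0 := pow_ne_zero _ (Subtype.coe_ne_coe.1 hDt)
  refine IsAlgebraic.of_smul (mem_nonZeroDivisors_of_ne_zero hs) ?_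
  exact isAlgebraic_algebraMap
    (⟨_, D.pow_mul_mem_adjoin_of_iterate_eq_zero hker hDDt hm⟩ : Algebra.adjoin R {t})

end Derivation

/-- If `A` is a domain containing `ℚ` and `D` a nonzero locally nilpotent derivation
of `A`, then the transcendence degree of `A` over `Ker(D)` is `1`: there is a single
element forming a transcendence basis of `A` over `Ker(D)`. -/
theorem stmt_13 {A : Type*} [CommRing A] [IsDomain A] [Algebra ℚ A]
    (D : Derivation ℤ A A) (hln : ∀ x : A, ∃ n : ℕ, (⇑D)^[n] x = 0) (hD : D ≠ 0)
    (B : Subalgebra ℤ A) (hB : ∀ a : A, a ∈ B ↔ D a = 0) :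
    ∃ t : A, IsTranscendenceBasis B (fun _ : Unit => t) := by
  obtain ⟨x, hx⟩ : ∃ x, D x ≠ 0 := by
    by_contra! h
    exact hD (Derivation.ext h)
  obtain ⟨n, hn⟩ := hln x
  obtain ⟨t, hDt, hDDt⟩ :=
    Function.exists_apply_ne_zero_and_apply_apply_eq_zero D.map_zero hx hn
  let DB := D.extendScalars B fun b ↦ (hB b).1 b.2
  have hker (a : A) (ha : DB a = 0) : a ∈ (⊥ : Subalgebra B A) :=
    Algebra.mem_bot.2 ⟨⟨a, (hB a).2 ha⟩, rfl⟩
  have : CharZero A := charZero_of_injective_algebraMap (algebraMap ℚ A).injective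
  have : CharZero B := RingHom.charZero (algebraMap B A)
  refine ⟨t, isTranscendenceBasis_iff_algebraicIndependent_isAlgebraic.2 ⟨?_, ?_⟩⟩
  · exact algebraicIndependent_unique_type_iff.2 (DB.transcendental_of_map_ne_zero hDt)
  · rw [Set.range_const]
    exact DB.isAlgebraic_adjoin_singleton hker hln hDt hDDt
end
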